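/- arXiv:2210.00307 — 2 statements merged into one kernel-verified Lean document; each statement's English description precedes it below -/
import Mathlib

section
/- Let φ : X → Y be a continuously differentiable mapping between Banach spaces, A a closed subset of Y, and x̄ ∈ φ⁻¹(A). Suppose A has the Shapiro first order contact property at φ(x̄) and φ is metrically regular around x̄. Then φ⁻¹(A) has the Shapiro first order contact property at x̄. -/
/-!
Fix `x, u ∈ φ⁻¹(A)` near `x̄` and write `D = φ'(u)`. Metric regularity at `u` yields, through
points of the fibres `φ⁻¹(φ u + t y)`, approximate preimages under `D` with norm `≤ 2κ‖y‖`; a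
Newton-type iteration makes them exact, so `D` is onto with `‖w‖ ≤ 4κ‖D w‖` uniformly in `u`.
The same fibre argument along a tangent sequence shows (Lyusternik) that every `v` with
`D v ∈ T(A, φ u)` is tangent to `φ⁻¹(A)` at `u`. Now choose `z ∈ T(A, φ u)` close to `φ x - φ u`
and solve `D w = z - D (x - u)`: then `x - u + w` is tangent to `φ⁻¹(A)` and
`‖w‖ ≤ 4κ (d(φ x - φ u, T(A, φ u)) + ‖φ x - φ u - D (x - u)‖)`, which is `o(‖x - u‖)` by the
contact property of `A`, the local Lipschitz continuity and the strict differentiability of `φ`.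
-/

open Filter Metric Set Pointwise Topology
open scoped ENNReal

noncomputable section

/-- The Bouligand (contingent) tangent cone of `A` at `u`. -/
def bouligand {X : Type*} [NormedAddCommGroup X] [NormedSpace ℝ X] (A : Set X) (u : X) :
    Set X :=
  {v | ∃ (vs : ℕ → X) (ts : ℕ → ℝ),
    Tendsto vs atTop (𝓝 v) ∧ Tendsto ts atTop (𝓝 0) ∧ (∀ n, 0 < ts n) ∧
    ∀ n, u + ts n • vs n ∈ A}

/-- The Shapiro first order contact property of `A` at `a`. -/
def shapiro {X : Type*} [NormedAddCommGroup X] [NormedSpace ℝ X] (A : Set X) (a : X) : Prop :=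
  ∀ ε > 0, ∃ δ > 0, ∀ x ∈ A ∩ ball a δ, ∀ u ∈ A ∩ ball a δ,
    infDist (x - u) (bouligand A u) ≤ ε * ‖x - u‖

/-- The lower Hadamard directional derivative of `φ` at `x` in direction `h`. -/
def hadamardDeriv {X : Type*} [NormedAddCommGroup X] [NormedSpace ℝ X]
    (φ : X → EReal) (x h : X) : EReal :=
  liminf (fun p : ℝ × X => (((1 : ℝ) / p.1 : ℝ) : EReal) * (φ (x + p.1 • p.2) - φ x))
    ((𝓝[>] (0 : ℝ)) ×ˢ 𝓝 h)

/-- The epigraph of an `EReal`-valued function, as a subset of `X × ℝ`. -/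
def epigraph {X : Type*} (φ : X → EReal) : Set (X × ℝ) := {p | φ p.1 ≤ (p.2 : EReal)}

/-- The Hausdorff-Pompeiu excess of `C` beyond `D`. -/
def excess {X : Type*} [PseudoEMetricSpace X] (C D : Set X) : ℝ≥0∞ :=
  ⨆ c ∈ C, EMetric.infEdist c D

/-- Metric regularity of `φ` around `xbar` (for `φ xbar`). -/
def metReg {X Y : Type*} [NormedAddCommGroup X] [NormedAddCommGroup Y]
    (φ : X → Y) (xbar : X) : Prop :=
  ∃ κ > (0 : ℝ), ∃ U ∈ 𝓝 xbar, ∃ V ∈ 𝓝 (φ xbar), ∀ x ∈ U, ∀ y ∈ V,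
    EMetric.infEdist x (φ ⁻¹' {y}) ≤ ENNReal.ofReal (κ * ‖φ x - y‖)

section Bouligand

variable {X : Type*} [NormedAddCommGroup X] [NormedSpace ℝ X]

theorem zero_mem_bouligand {A : Set X} {u : X} (hu : u ∈ A) : (0 : X) ∈ bouligand A u :=
  ⟨fun _ => 0, fun n => 1 / (n + 1), tendsto_const_nhds,
    tendsto_one_div_add_atTop_nhds_zero_nat, fun _ => by positivity, fun _ => by simpa using hu⟩

theorem mem_bouligand_of_eventually {A : Set X} {u v : X} {vs : ℕ → X} {ts : ℕ → ℝ}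
    (hvs : Tendsto vs atTop (𝓝 v)) (hts : Tendsto ts atTop (𝓝 0))
    (h : ∀ᶠ n in atTop, 0 < ts n ∧ u + ts n • vs n ∈ A) : v ∈ bouligand A u := by
  obtain ⟨N, hN⟩ := eventually_atTop.1 h
  exact ⟨fun n => vs (n + N), fun n => ts (n + N), hvs.comp (tendsto_add_atTop_nat N),
    hts.comp (tendsto_add_atTop_nat N), fun n => (hN _ le_add_self).1,
    fun n => (hN _ le_add_self).2⟩

theorem mem_bouligand_of_dist_le {A : Set X} {u v : X} {xs : ℕ → X} {ts δ : ℕ → ℝ}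
    (hts : Tendsto ts atTop (𝓝 0)) (hδ : Tendsto δ atTop (𝓝 0))
    (h : ∀ᶠ n in atTop, 0 < ts n ∧ xs n ∈ A ∧ dist (u + ts n • v) (xs n) ≤ ts n * δ n) :
    v ∈ bouligand A u := by
  refine mem_bouligand_of_eventually (vs := fun n => (ts n)⁻¹ • (xs n - u)) ?_ hts ?_
  · rw [tendsto_iff_norm_sub_tendsto_zero]
    refine squeeze_zero' (.of_forall fun n => norm_nonneg _) ?_ hδ
    filter_upwards [h] with n hn
    obtain ⟨ht, -, hn⟩ := hn
    have hx : (ts n)⁻¹ • (xs n - u) - v = (ts n)⁻¹ • (xs n - (u + ts n • v)) := by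
      rw [sub_add_eq_sub_sub, smul_sub _ (xs n - u), inv_smul_smul₀ ht.ne']
    rwa [hx, norm_smul, Real.norm_of_nonneg (inv_nonneg.2 ht.le), inv_mul_le_iff₀ ht,
      ← dist_eq_norm, dist_comm]
  · filter_upwards [h] with n hn
    rw [smul_inv_smul₀ hn.1.ne', add_sub_cancel]
    exact ⟨hn.1, hn.2.1⟩

theorem shapiro_iff_eventually {A : Set X} {a : X} :
    shapiro A a ↔ ∀ ε > 0, ∀ᶠ p in 𝓝 a ×ˢ 𝓝 a, p.1 ∈ A → p.2 ∈ A →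
      infDist (p.1 - p.2) (bouligand A p.2) ≤ ε * ‖p.1 - p.2‖ := by
  refine forall₂_congr fun ε _ => ?_
  rw [nhds_basis_ball.prod_self.eventually_iff]
  simp only [mem_prod, mem_inter_iff, and_imp, Prod.forall]
  grind

end Bouligand

theorem exists_dist_lt_of_infEDist_le {X : Type*} [PseudoMetricSpace X] {x : X} {s : Set X}
    {a η : ℝ} (h : infEDist x s ≤ ENNReal.ofReal a) (ha : 0 ≤ a) (hη : 0 < η) :
    ∃ y ∈ s, dist x y < a + η := by
  have hlt : infEDist x s < ENNReal.ofReal (a + η) :=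
    h.trans_lt ((ENNReal.ofReal_lt_ofReal_iff (by linarith)).2 (by linarith))
  obtain ⟨y, hy, hxy⟩ := infEDist_lt_iff.1 hlt
  exact ⟨y, hy, edist_lt_ofReal.1 hxy⟩

namespace ContinuousLinearMap

variable {X Y : Type*} [NormedAddCommGroup X] [NormedSpace ℝ X]
  [NormedAddCommGroup Y] [NormedSpace ℝ Y]

theorem infDist_le_of_preimage_subset (D : X →L[ℝ] Y) {C : ℝ} (hC : 0 ≤ C)
    (hD : ∀ y, ∃ x, D x = y ∧ ‖x‖ ≤ C * ‖y‖) {S : Set Y} {T : Set X}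
    (hST : D ⁻¹' S ⊆ T) (hS : S.Nonempty) (a : X) (b : Y) :
    infDist a T ≤ C * (infDist b S + ‖b - D a‖) := by
  refine le_of_forall_pos_lt_add fun η hη => ?_
  obtain ⟨z, hzS, hz⟩ := (infDist_lt_iff hS).1
    (lt_add_of_pos_right (infDist b S) (show 0 < η / (C + 1) by positivity))
  obtain ⟨w, hw, hwC⟩ := hD (z - D a)
  have hmem : a + w ∈ T := hST (by simpa [hw] using hzS)
  calc infDist a T ≤ ‖w‖ := by simpa [dist_eq_norm] using infDist_le_dist_of_mem (x := a) hmem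
    _ ≤ C * ‖z - D a‖ := hwC
    _ ≤ C * (dist b z + ‖b - D a‖) := by
      gcongr
      rw [dist_eq_norm']
      exact norm_sub_le_norm_sub_add_norm_sub _ _ _
    _ ≤ C * (infDist b S + ‖b - D a‖) + C * (η / (C + 1)) := by
      rw [← mul_add]; exact mul_le_mul_of_nonneg_left (by linarith) hC
    _ < C * (infDist b S + ‖b - D a‖) + η := by
      gcongr
      rw [mul_div_assoc', div_lt_iff₀ (by positivity)]
      linarith

theorem exists_preimage_norm_le_of_approx [CompleteSpace X] (D : X →L[ℝ] Y) {C : ℝ}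
    (hC : 0 ≤ C) (h : ∀ y, ∃ x, ‖x‖ ≤ C * ‖y‖ ∧ ‖D x - y‖ ≤ 1 / 2 * ‖y‖) (y : Y) :
    ∃ x, D x = y ∧ ‖x‖ ≤ 2 * C * ‖y‖ := by
  choose g hg_norm hg_approx using h
  -- `r n` is what is left to solve after `n` corrections by approximate preimages.
  set r : ℕ → Y := fun n => (fun z => z - D (g z))^[n] y
  have hr_succ (n : ℕ) : r (n + 1) = r n - D (g (r n)) := Function.iterate_succ_apply' _ n y
  have hr (n : ℕ) : ‖r n‖ ≤ (1 / 2) ^ n * ‖y‖ := by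
    induction n with
    | zero => simp [r]
    | succ n ih =>
      rw [hr_succ, norm_sub_rev, pow_succ', mul_assoc]
      exact (hg_approx _).trans (by gcongr)
  have hg (n : ℕ) : ‖g (r n)‖ ≤ C * ‖y‖ * (1 / 2) ^ n :=
    (hg_norm _).trans (by nlinarith [hr n])
  have hsum : Summable fun n => ‖g (r n)‖ :=
    .of_nonneg_of_le (fun _ => norm_nonneg _) hg (summable_geometric_two.mul_left _)
  have hr_lim : Tendsto r atTop (𝓝 0) :=
    squeeze_zero_norm hr (by simpa using (tendsto_pow_atTop_nhds_zero_of_lt_one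
      (by norm_num : (0 : ℝ) ≤ 1 / 2) (by norm_num)).mul_const ‖y‖)
  have htel : HasSum (fun n => D (g (r n))) y := by
    rw [Summable.hasSum_iff_tendsto_nat (f := fun n => D (g (r n)))
      (hsum.of_norm.map D D.continuous)]
    have h := tendsto_const_nhds (x := y).sub hr_lim
    rw [sub_zero] at h
    refine h.congr fun n => ?_
    have hstep (k : ℕ) : D (g (r k)) = r k - r (k + 1) := by rw [hr_succ]; abel
    rw [Finset.sum_congr rfl fun k _ => hstep k, Finset.sum_range_sub']
    rfl
  refine ⟨∑' n, g (r n), by rw [D.map_tsum hsum.of_norm, htel.tsum_eq], ?_⟩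
  calc ‖∑' n, g (r n)‖ ≤ ∑' n, ‖g (r n)‖ := norm_tsum_le_tsum_norm hsum
    _ ≤ ∑' n, C * ‖y‖ * (1 / 2) ^ n := hsum.tsum_le_tsum hg (summable_geometric_two.mul_left _)
    _ = 2 * C * ‖y‖ := by rw [tsum_mul_left, tsum_geometric_two]; ring

end ContinuousLinearMap

theorem HasStrictFDerivAt.eventually_norm_sub_sub_le {X Y : Type*}
    [NormedAddCommGroup X] [NormedSpace ℝ X] [NormedAddCommGroup Y] [NormedSpace ℝ Y]
    {φ : X → Y} {φ' : X → X →L[ℝ] Y} {x₀ : X} (hφ : HasStrictFDerivAt φ (φ' x₀) x₀)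
    (hφ' : ContinuousAt φ' x₀) {ε : ℝ} (hε : 0 < ε) :
    ∀ᶠ p in 𝓝 x₀ ×ˢ 𝓝 x₀, ‖φ p.1 - φ p.2 - φ' p.2 (p.1 - p.2)‖ ≤ ε * ‖p.1 - p.2‖ := by
  have hstrict := hφ.isLittleO.def (half_pos hε)
  have hcont : ∀ᶠ p : X × X in 𝓝 x₀ ×ˢ 𝓝 x₀, dist (φ' p.2) (φ' x₀) ≤ ε / 2 :=
    tendsto_snd.eventually (hφ'.eventually (closedBall_mem_nhds _ (half_pos hε)))
  rw [← nhds_prod_eq] at hcont ⊢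
  filter_upwards [hstrict, hcont] with p h₁ h₂
  calc ‖φ p.1 - φ p.2 - φ' p.2 (p.1 - p.2)‖
        ≤ ‖φ p.1 - φ p.2 - φ' x₀ (p.1 - p.2)‖ + ‖(φ' p.2 - φ' x₀) (p.1 - p.2)‖ := by
          rw [sub_apply, ← sub_sub_sub_cancel_right _ _ (φ' x₀ (p.1 - p.2))]
          exact norm_sub_le _ _
    _ ≤ ε / 2 * ‖p.1 - p.2‖ + ε / 2 * ‖p.1 - p.2‖ :=
          add_le_add h₁ (((φ' p.2 - φ' x₀).le_opNorm _).trans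
            (by rw [← dist_eq_norm]; gcongr))
    _ = ε * ‖p.1 - p.2‖ := by ring

section MetricRegularity

variable {X Y : Type*} [NormedAddCommGroup X] [NormedAddCommGroup Y]

/-- `metReg` localized at the single point `x₀`, with the modulus `κ` fixed. -/
def MetRegWith (κ : ℝ) (φ : X → Y) (x₀ : X) : Prop :=
  ∀ᶠ p in 𝓝 (x₀, φ x₀), infEDist p.1 (φ ⁻¹' {p.2}) ≤ ENNReal.ofReal (κ * ‖φ p.1 - p.2‖)

theorem metReg.exists_eventually_metRegWith {φ : X → Y} {x₀ : X} (h : metReg φ x₀)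
    (hφ : ContinuousAt φ x₀) : ∃ κ > 0, ∀ᶠ x in 𝓝 x₀, MetRegWith κ φ x := by
  obtain ⟨κ, hκ, U, hU, V, hV, hreg⟩ := h
  have hx₀ : MetRegWith κ φ x₀ := by
    rw [MetRegWith, nhds_prod_eq]
    filter_upwards [prod_mem_prod hU hV] with p hp using hreg _ hp.1 _ hp.2
  exact ⟨κ, hκ, (continuousAt_id.prodMk hφ).eventually hx₀.eventually_nhds⟩

namespace MetRegWith

variable [NormedSpace ℝ X] [NormedSpace ℝ Y] {κ : ℝ} {φ : X → Y} {D : X →L[ℝ] Y} {x₀ : X}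

theorem exists_approx_preimage (h : MetRegWith κ φ x₀) (hκ : 0 < κ) (hd : HasFDerivAt φ D x₀)
    {ε : ℝ} (hε : 0 < ε) (y : Y) : ∃ x, ‖x‖ ≤ 2 * κ * ‖y‖ ∧ ‖D x - y‖ ≤ ε * ‖y‖ := by
  rcases eq_or_ne y 0 with rfl | hy
  · exact ⟨0, by simp, by simp⟩
  replace hy : 0 < ‖y‖ := norm_pos_iff.2 hy
  obtain ⟨ρ, hρ, hlin⟩ :=
    Metric.eventually_nhds_iff.1 (hd.isLittleO.def (by positivity : 0 < ε / (2 * κ)))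
  have hline : Tendsto (fun t : ℝ => (x₀, φ x₀ + t • y)) (𝓝[>] 0) (𝓝 (x₀, φ x₀)) :=
    tendsto_nhdsWithin_of_tendsto_nhds (Continuous.tendsto' (by fun_prop) _ _ (by simp))
  have hsmall : ∀ᶠ t : ℝ in 𝓝[>] 0, 2 * κ * t * ‖y‖ < ρ :=
    tendsto_nhdsWithin_of_tendsto_nhds (Continuous.tendsto' (by fun_prop) _ _ (by simp))
      |>.eventually (gt_mem_nhds hρ)
  obtain ⟨t, (ht : 0 < t), hreg, htρ⟩ :=
    (eventually_mem_nhdsWithin.and ((hline.eventually h).and hsmall)).exists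
  have hty : ‖φ x₀ - (φ x₀ + t • y)‖ = t * ‖y‖ := by simp [norm_smul, ht.le]
  dsimp only at hreg
  rw [hty] at hreg
  obtain ⟨x, hxφ, hdist⟩ :=
    exists_dist_lt_of_infEDist_le hreg (by positivity) (by positivity : 0 < κ * (t * ‖y‖))
  have hxx₀ : ‖x - x₀‖ ≤ 2 * κ * t * ‖y‖ := by
    rw [dist_comm, dist_eq_norm] at hdist; linarith
  refine ⟨t⁻¹ • (x - x₀), ?_, ?_⟩
  · rw [norm_smul, Real.norm_of_nonneg (inv_nonneg.2 ht.le), inv_mul_le_iff₀ ht]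
    linarith
  · have hφx : φ x - φ x₀ = t • y := by
      rw [mem_preimage, mem_singleton_iff] at hxφ; rw [hxφ, add_sub_cancel_left]
    have hrw : D (t⁻¹ • (x - x₀)) - y = -(t⁻¹ • (φ x - φ x₀ - D (x - x₀))) := by
      rw [hφx, map_smul, smul_sub, inv_smul_smul₀ ht.ne']; abel
    rw [hrw, norm_neg, norm_smul, Real.norm_of_nonneg (inv_nonneg.2 ht.le), inv_mul_le_iff₀ ht]
    calc ‖φ x - φ x₀ - D (x - x₀)‖ ≤ ε / (2 * κ) * ‖x - x₀‖ :=
          hlin (by rw [dist_eq_norm]; linarith)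
      _ ≤ ε / (2 * κ) * (2 * κ * t * ‖y‖) := by gcongr
      _ = t * (ε * ‖y‖) := by field_simp

theorem exists_preimage_norm_le [CompleteSpace X] (h : MetRegWith κ φ x₀) (hκ : 0 < κ)
    (hd : HasFDerivAt φ D x₀) (y : Y) : ∃ x, D x = y ∧ ‖x‖ ≤ 4 * κ * ‖y‖ := by
  obtain ⟨x, hx, hxy⟩ := D.exists_preimage_norm_le_of_approx (by positivity)
    (fun y => h.exists_approx_preimage hκ hd one_half_pos y) y
  exact ⟨x, hx, hxy.trans_eq (by ring)⟩

theorem preimage_bouligand_subset (h : MetRegWith κ φ x₀) (hκ : 0 ≤ κ)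
    (hd : HasFDerivAt φ D x₀) (A : Set Y) :
    D ⁻¹' bouligand A (φ x₀) ⊆ bouligand (φ ⁻¹' A) x₀ := by
  rintro v ⟨zs, ts, hzs, hts, hts_pos, hmem⟩
  have hts' : Tendsto ts atTop (𝓝[>] 0) :=
    tendsto_nhdsWithin_iff.2 ⟨hts, .of_forall hts_pos⟩
  set q : ℕ → Y := fun n => (ts n)⁻¹ • (φ (x₀ + ts n • v) - φ x₀)
  have hq : Tendsto q atTop (𝓝 (D v)) := by
    simpa only [Pi.inv_apply, inv_inv] using
      hd.lim v (tendsto_norm_atTop_atTop.comp hts'.inv_tendsto_nhdsGT_zero)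
  have hpair : Tendsto (fun n => (x₀ + ts n • v, φ x₀ + ts n • zs n)) atTop (𝓝 (x₀, φ x₀)) := by
    have h₁ := tendsto_const_nhds (x := x₀) |>.add (hts.smul_const v)
    have h₂ := tendsto_const_nhds (x := φ x₀) |>.add (hts.smul hzs)
    simpa using h₁.prodMk_nhds h₂
  -- Regularity at `(x₀ + tₙ v, φ x₀ + tₙ zₙ)` moves `x₀ + tₙ v` into `φ⁻¹(A)` at a cost
  -- `κ tₙ ‖qₙ - zₙ‖ + o(tₙ)`, and `qₙ - zₙ → D v - D v = 0`.
  have hnear : ∀ᶠ n in atTop, ∃ x ∈ φ ⁻¹' {φ x₀ + ts n • zs n},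
      dist (x₀ + ts n • v) x < κ * ‖φ (x₀ + ts n • v) - (φ x₀ + ts n • zs n)‖ + ts n / (n + 1) :=
    (hpair.eventually h).mono fun n hn =>
      exists_dist_lt_of_infEDist_le hn (by positivity) (div_pos (hts_pos n) (by positivity))
  obtain ⟨xs, hxs⟩ := hnear.choice
  refine mem_bouligand_of_dist_le (xs := xs)
    (δ := fun n => κ * ‖q n - zs n‖ + 1 / ((n : ℝ) + 1)) hts
    (by simpa using ((hq.sub hzs).norm.const_mul κ).add tendsto_one_div_add_atTop_nhds_zero_nat) ?_
  filter_upwards [hxs] with n hn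
  have ht := hts_pos n
  have hφ : φ (x₀ + ts n • v) - (φ x₀ + ts n • zs n) = ts n • (q n - zs n) := by
    simp only [q, smul_sub, smul_inv_smul₀ ht.ne']; abel
  refine ⟨ht, by rw [mem_preimage, mem_singleton_iff.1 hn.1]; exact hmem n, ?_⟩
  rw [hφ, norm_smul, Real.norm_of_nonneg ht.le] at hn
  calc dist (x₀ + ts n • v) (xs n) ≤ κ * (ts n * ‖q n - zs n‖) + ts n / (n + 1) := hn.2.le
    _ = ts n * (κ * ‖q n - zs n‖ + 1 / (n + 1)) := by ring

end MetRegWith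

end MetricRegularity

theorem shapiro_preimage_of_metReg_general {X Y : Type*}
    [NormedAddCommGroup X] [NormedSpace ℝ X] [CompleteSpace X]
    [NormedAddCommGroup Y] [NormedSpace ℝ Y]
    (φ : X → Y) (hφ : ContDiff ℝ 1 φ)
    (A : Set Y)
    (xbar : X)
    (hA : shapiro A (φ xbar)) (hmr : metReg φ xbar) :
    shapiro (φ ⁻¹' A) xbar := by
  obtain ⟨κ, hκ, hreg⟩ := hmr.exists_eventually_metRegWith hφ.continuous.continuousAt
  obtain ⟨K, t, ht, hK⟩ := (hφ.contDiffAt (x := xbar)).exists_lipschitzOnWith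
  have hφ' (x : X) : HasFDerivAt φ (fderiv ℝ φ x) x := (hφ.differentiable one_ne_zero x).hasFDerivAt
  rw [shapiro_iff_eventually] at hA ⊢
  intro ε hε
  set C := 4 * κ
  set εA := ε / (2 * C * (K + 1))
  set εφ := ε / (2 * C)
  have hcontact := (hφ.continuous.tendsto xbar).prodMap (hφ.continuous.tendsto xbar)
    |>.eventually (hA εA (by positivity))
  have hlin := (hφ.hasStrictFDerivAt (x := xbar) one_ne_zero).eventually_norm_sub_sub_le
    (hφ.continuous_fderiv one_ne_zero).continuousAt (show 0 < εφ by positivity)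
  filter_upwards [hcontact, hlin, prod_mem_prod ht ht, hreg.prod_inr _]
    with ⟨x, u⟩ hcontact_xu hlin_xu ⟨hx, hu⟩ hregu hxA huA
  have key := (fderiv ℝ φ u).infDist_le_of_preimage_subset (by positivity)
    (hregu.exists_preimage_norm_le hκ (hφ' u)) (hregu.preimage_bouligand_subset hκ.le (hφ' u) A)
    ⟨0, zero_mem_bouligand huA⟩ (x - u) (φ x - φ u)
  calc infDist (x - u) (bouligand (φ ⁻¹' A) u)
      ≤ C * (εA * ‖φ x - φ u‖ + εφ * ‖x - u‖) := key.trans <|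
        mul_le_mul_of_nonneg_left (add_le_add (hcontact_xu hxA huA) hlin_xu) (by positivity)
    _ ≤ C * (εA * ((K + 1) * ‖x - u‖) + εφ * ‖x - u‖) := by
      gcongr
      exact (hK.norm_sub_le hx hu).trans (by gcongr; linarith)
    _ = ε * ‖x - u‖ := by simp only [C, εA, εφ]; field_simp; ring

theorem shapiro_preimage_of_metReg {X Y : Type*}
    [NormedAddCommGroup X] [NormedSpace ℝ X] [CompleteSpace X]
    [NormedAddCommGroup Y] [NormedSpace ℝ Y] [CompleteSpace Y]
    (φ : X → Y) (hφ : ContDiff ℝ 1 φ)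
    (A : Set Y) (hAcl : IsClosed A)
    (xbar : X) (hxbar : xbar ∈ φ ⁻¹' A)
    (hA : shapiro A (φ xbar)) (hmr : metReg φ xbar) :
    shapiro (φ ⁻¹' A) xbar :=
  shapiro_preimage_of_metReg_general φ hφ A xbar hA hmr
end
end

section
/- Let X be a Banach space, φ : X → ℝ∪{+∞} a proper lower semicontinuous function, S_φ := {x ∈ X : φ(x) ≤ 0}, and x̄ ∈ S_φ. Suppose the boundary of S_φ is contained in φ⁻¹(0), φ has the epigraphical Shapiro first order contact property at x̄, and there exists r₀ > 0 such that S_φ has the Shapiro first order contact property at every point of S_φ ∩ B(x̄, r₀). If the inequality φ(x) ≤ 0 has a local error bound at x̄ with constant τ > 0, then there exists δ > 0 such that for every x ∈ bd(S_φ) ∩ B(x̄, δ) the inequality φ'_H(x; ·) ≤ 0 has a global error bound with the same constant τ, i.e., d(h, S_{φ'_H(x,·)}) ≤ τ·max{φ'_H(x; h), 0} for all h ∈ X, where S_{φ'_H(x,·)} := {u ∈ X : φ'_H(x; u) ≤ 0}. -/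
open Filter Metric Set Pointwise Topology
open scoped ENNReal

noncomputable section

/-!
Write `S = {φ ≤ 0}` and take `x ∈ bd S`, so `φ x = 0`. Every Bouligand tangent direction of `S`
at `x` lies in `{φ'_H(x; ·) ≤ 0}`, so it suffices to bound the distance from `h` to `T^B(S, x)`.
If `φ'_H(x; h) < c`, there are arbitrarily small `t > 0` and `h'` near `h` with
`φ (x + t • h') < t c`. The error bound, valid near `x` because `x` is near `x̄`, yields `s ∈ S`
within about `τ t c` of `x + t • h'`, and the Shapiro property of `S` at `x` puts `s - x` within
`o(t)` of the cone. Dividing by `t`, `h` lies within about `τ c` of the cone.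
-/

section

variable {X : Type*} [NormedAddCommGroup X] [NormedSpace ℝ X]

section Bouligand

variable {A : Set X} {x : X}

lemma zero_mem_bouligand_s14 (hx : x ∈ A) : (0 : X) ∈ bouligand A x :=
  ⟨fun _ => 0, fun n => 1 / (n + 1), tendsto_const_nhds,
    tendsto_one_div_add_atTop_nhds_zero_nat, fun _ => by positivity, fun _ => by simpa using hx⟩

lemma smul_mem_bouligand {v : X} {c : ℝ} (hc : 0 < c) (hv : v ∈ bouligand A x) :
    c • v ∈ bouligand A x := by
  obtain ⟨vs, ts, hvs, hts, hts_pos, hmem⟩ := hv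
  refine ⟨fun n => c • vs n, fun n => ts n / c, hvs.const_smul c, by simpa using hts.div_const c,
    fun n => div_pos (hts_pos n) hc, fun n => ?_⟩
  rw [smul_smul, div_mul_cancel₀ _ hc.ne']
  exact hmem n

lemma infDist_smul_bouligand_le (hx : x ∈ A) {c : ℝ} (hc : 0 < c) (v : X) :
    infDist (c • v) (bouligand A x) ≤ c * infDist v (bouligand A x) := by
  have hsub : c • bouligand A x ⊆ bouligand A x := by
    rintro _ ⟨w, hw, rfl⟩
    exact smul_mem_bouligand hc hw
  calc infDist (c • v) (bouligand A x)
      ≤ infDist (c • v) (c • bouligand A x) :=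
        infDist_le_infDist_of_subset hsub ((Set.nonempty_of_mem (zero_mem_bouligand_s14 hx)).smul_set)
    _ = c * infDist v (bouligand A x) := by
        rw [infDist_smul₀ hc.ne', Real.norm_of_nonneg hc.le]

-- Compare `h` with `t⁻¹ • (s - x)`: scaling by `t⁻¹` maps the cone into itself.
lemma infDist_bouligand_le (hx : x ∈ A) {t : ℝ} (ht : 0 < t) (h h' s : X) :
    infDist h (bouligand A x) ≤
      dist h h' + (dist (x + t • h') s + infDist (s - x) (bouligand A x)) / t := by
  have hscale : dist h' (t⁻¹ • (s - x)) = dist (x + t • h') s / t := by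
    have hh' : h' = t⁻¹ • (x + t • h' - x) := by
      rw [add_sub_cancel_left, smul_smul, inv_mul_cancel₀ ht.ne', one_smul]
    nth_rewrite 1 [hh']
    rw [dist_smul₀, dist_sub_right, Real.norm_of_nonneg (inv_nonneg.2 ht.le), inv_mul_eq_div]
  calc infDist h (bouligand A x)
      ≤ infDist (t⁻¹ • (s - x)) (bouligand A x) + dist h (t⁻¹ • (s - x)) :=
        infDist_le_infDist_add_dist
    _ ≤ t⁻¹ * infDist (s - x) (bouligand A x) + (dist h h' + dist h' (t⁻¹ • (s - x))) :=
        add_le_add (infDist_smul_bouligand_le hx (inv_pos.2 ht) _) (dist_triangle _ _ _)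
    _ = dist h h' + (dist (x + t • h') s + infDist (s - x) (bouligand A x)) / t := by
        rw [hscale]; ring

end Bouligand

lemma EReal.coe_one_div_mul_lt_iff {t c : ℝ} (ht : 0 < t) {a : EReal} :
    (((1 : ℝ) / t : ℝ) : EReal) * a < c ↔ a < (t * c : ℝ) := by
  induction a using EReal.rec with
  | bot =>
    rw [EReal.coe_mul_bot_of_pos (one_div_pos.2 ht)]
    exact iff_of_true (EReal.bot_lt_coe c) (EReal.bot_lt_coe _)
  | top =>
    rw [EReal.coe_mul_top_of_pos (one_div_pos.2 ht)]
    exact iff_of_false not_top_lt not_top_lt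
  | coe r =>
    rw [← EReal.coe_mul, EReal.coe_lt_coe_iff, EReal.coe_lt_coe_iff, one_div_mul_eq_div,
      div_lt_iff₀ ht, mul_comm]

section HadamardDeriv

variable {φ : X → EReal} {x : X} {τ : ℝ}

lemma hadamardDeriv_nonpos_of_mem_bouligand (hx : φ x = 0) {v : X}
    (hv : v ∈ bouligand {y | φ y ≤ 0} x) : hadamardDeriv φ x v ≤ 0 := by
  obtain ⟨vs, ts, hvs, hts, hts_pos, hmem⟩ := hv
  have htend : Tendsto (fun n => (ts n, vs n)) atTop (𝓝[>] 0 ×ˢ 𝓝 v) :=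
    (tendsto_nhdsWithin_of_tendsto_nhds_of_eventually_within _ hts
      (Eventually.of_forall hts_pos)).prodMk hvs
  calc hadamardDeriv φ x v
      ≤ liminf (fun n => (((1 : ℝ) / ts n : ℝ) : EReal) * (φ (x + ts n • vs n) - φ x)) atTop :=
        liminf_le_liminf_of_le htend
    _ ≤ liminf (fun _ => 0) atTop := by
        refine liminf_le_liminf (Eventually.of_forall fun n => ?_)
        rw [hx, sub_zero]
        exact EReal.mul_nonpos_iff.2
          (Or.inl ⟨EReal.coe_nonneg.2 (one_div_pos.2 (hts_pos n)).le, hmem n⟩)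
    _ = 0 := liminf_const 0

lemma frequently_lt_of_hadamardDeriv_lt (hx : φ x = 0) {h : X} {c : ℝ}
    (hlt : hadamardDeriv φ x h < c) :
    ∃ᶠ p in 𝓝[>] (0 : ℝ) ×ˢ 𝓝 h, 0 < p.1 ∧ φ (x + p.1 • p.2) < (p.1 * c : ℝ) := by
  have hpos : ∀ᶠ p : ℝ × X in 𝓝[>] 0 ×ˢ 𝓝 h, 0 < p.1 :=
    tendsto_fst.eventually self_mem_nhdsWithin
  refine ((frequently_lt_of_liminf_lt (by isBoundedDefault) hlt).and_eventually hpos).mono ?_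
  rintro ⟨t, h'⟩ ⟨hq, ht⟩
  simp only [hx, sub_zero] at hq
  exact ⟨ht, (EReal.coe_one_div_mul_lt_iff ht).1 hq⟩

lemma infDist_bouligand_le_add_of_hadamardDeriv_lt (hx : φ x = 0)
    (hshap : shapiro {y | φ y ≤ 0} x) (hτ : 0 ≤ τ)
    (heb : ∀ᶠ y in 𝓝 x, ((infDist y {y | φ y ≤ 0} : ℝ) : EReal) ≤ (τ : EReal) * max (φ y) 0)
    {h : X} {c : ℝ} (hc : 0 ≤ c) (hlt : hadamardDeriv φ x h < c) {ε : ℝ} (hε : 0 < ε) :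
    infDist h (bouligand {y | φ y ≤ 0} x) ≤ τ * c + ε * (2 + τ * c + ‖h‖ + 2 * ε) := by
  set S := {y | φ y ≤ 0}
  have hxS : x ∈ S := hx.le
  set K := τ * c + ‖h‖ + 2 * ε
  have hK : 0 < K := by positivity
  obtain ⟨δ, hδ, hsh⟩ := hshap ε hε
  have hy : Tendsto (fun p : ℝ × X => x + p.1 • p.2) (𝓝[>] 0 ×ˢ 𝓝 h) (𝓝 x) := by
    have hcont : Continuous (fun p : ℝ × X => x + p.1 • p.2) := by fun_prop
    simpa [nhds_prod_eq] using
      (hcont.tendsto (0, h)).mono_left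
        (by rw [nhds_prod_eq]; exact prod_mono nhdsWithin_le_nhds le_rfl)
  have hnear : ∀ᶠ p : ℝ × X in 𝓝[>] 0 ×ˢ 𝓝 h, p.1 < δ / K ∧ dist p.2 h < ε ∧
      ((infDist (x + p.1 • p.2) S : ℝ) : EReal) ≤ (τ : EReal) * max (φ (x + p.1 • p.2)) 0 :=
    (tendsto_fst.eventually (eventually_nhdsWithin_of_eventually_nhds
      (eventually_lt_nhds (div_pos hδ hK)))).and
      ((tendsto_snd.eventually (ball_mem_nhds h hε)).and (hy.eventually heb))
  obtain ⟨⟨t, h'⟩, ⟨ht, hφ⟩, htδ, hh', heb'⟩ :=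
    ((frequently_lt_of_hadamardDeriv_lt hx hlt).and_eventually hnear).exists
  dsimp only at ht hφ htδ hh' heb'
  have hyS : infDist (x + t • h') S < t * (τ * c + ε) := by
    have hmax : max (φ (x + t • h')) 0 ≤ ((t * c : ℝ) : EReal) :=
      max_le hφ.le (EReal.coe_nonneg.2 (by positivity))
    have hle : infDist (x + t • h') S ≤ τ * (t * c) := by
      exact_mod_cast heb'.trans (mul_le_mul_of_nonneg_left hmax (EReal.coe_nonneg.2 hτ))
    nlinarith
  obtain ⟨s, hs, hys⟩ := (infDist_lt_iff ⟨x, hxS⟩).1 hyS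
  have hyx : ‖x + t • h' - x‖ < t * (‖h‖ + ε) := by
    rw [add_sub_cancel_left, norm_smul, Real.norm_of_nonneg ht.le]
    gcongr
    linarith [norm_le_norm_add_norm_sub' h' h, dist_eq_norm h' h]
  have hsx : ‖s - x‖ < t * K := by
    calc ‖s - x‖ ≤ ‖s - (x + t • h')‖ + ‖x + t • h' - x‖ := norm_sub_le_norm_sub_add_norm_sub _ _ _
      _ < t * (τ * c + ε) + t * (‖h‖ + ε) := by
        rw [← dist_eq_norm, dist_comm]; exact add_lt_add hys hyx
      _ = t * K := by ring
  have hcone : infDist (s - x) (bouligand S x) ≤ ε * (t * K) := by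
    refine (hsh s ⟨hs, ?_⟩ x ⟨hxS, mem_ball_self hδ⟩).trans (by gcongr)
    rw [mem_ball, dist_eq_norm]
    exact hsx.trans ((lt_div_iff₀ hK).1 htδ)
  calc infDist h (bouligand S x)
      ≤ dist h h' + (dist (x + t • h') s + infDist (s - x) (bouligand S x)) / t :=
        infDist_bouligand_le hxS ht h h' s
    _ ≤ ε + (t * (τ * c + ε) + ε * (t * K)) / t := by
        rw [dist_comm] at hh'
        gcongr
    _ = τ * c + ε * (2 + τ * c + ‖h‖ + 2 * ε) := by
        field_simp
        ring

lemma infDist_bouligand_le_of_hadamardDeriv_lt (hx : φ x = 0)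
    (hshap : shapiro {y | φ y ≤ 0} x) (hτ : 0 ≤ τ)
    (heb : ∀ᶠ y in 𝓝 x, ((infDist y {y | φ y ≤ 0} : ℝ) : EReal) ≤ (τ : EReal) * max (φ y) 0)
    {h : X} {c : ℝ} (hc : 0 ≤ c) (hlt : hadamardDeriv φ x h < c) :
    infDist h (bouligand {y | φ y ≤ 0} x) ≤ τ * c := by
  have hbound : Tendsto (fun ε : ℝ => τ * c + ε * (2 + τ * c + ‖h‖ + 2 * ε)) (𝓝[>] 0)
      (𝓝 (τ * c)) := by
    have hcont : Continuous fun ε : ℝ => τ * c + ε * (2 + τ * c + ‖h‖ + 2 * ε) := by fun_prop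
    simpa using (hcont.tendsto 0).mono_left nhdsWithin_le_nhds
  exact ge_of_tendsto hbound (eventually_nhdsWithin_of_forall fun ε hε =>
    infDist_bouligand_le_add_of_hadamardDeriv_lt hx hshap hτ heb hc hlt hε)

theorem infEDist_le_mul_max_hadamardDeriv (hx : φ x = 0) (hshap : shapiro {y | φ y ≤ 0} x)
    (hτ : 0 < τ)
    (heb : ∀ᶠ y in 𝓝 x, ((infDist y {y | φ y ≤ 0} : ℝ) : EReal) ≤ (τ : EReal) * max (φ y) 0)
    (h : X) :
    ((infEDist h {u | hadamardDeriv φ x u ≤ 0} : ℝ≥0∞) : EReal) ≤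
      (τ : EReal) * max (hadamardDeriv φ x h) 0 := by
  rcases le_or_gt (hadamardDeriv φ x h) 0 with hD | hD
  · rw [infEDist_zero_of_mem (show h ∈ {u | hadamardDeriv φ x u ≤ 0} from hD),
      max_eq_right hD]
    simp
  rcases eq_or_ne (hadamardDeriv φ x h) ⊤ with hDtop | hDtop
  · rw [hDtop, max_eq_left le_top, EReal.coe_mul_top_of_pos hτ]
    exact le_top
  set d := (hadamardDeriv φ x h).toReal
  have hd : (d : EReal) = hadamardDeriv φ x h := EReal.coe_toReal hDtop (ne_bot_of_gt hD)
  have hdpos : 0 < d := by exact_mod_cast hd ▸ hD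
  have hdist : infDist h (bouligand {y | φ y ≤ 0} x) ≤ τ * d := by
    refine le_of_forall_pos_le_add fun e he => ?_
    have hlt : hadamardDeriv φ x h < ((d + e / τ : ℝ) : EReal) := by
      rw [← hd]
      exact_mod_cast lt_add_of_pos_right d (div_pos he hτ)
    calc infDist h (bouligand {y | φ y ≤ 0} x)
        ≤ τ * (d + e / τ) :=
          infDist_bouligand_le_of_hadamardDeriv_lt hx hshap hτ.le heb (by positivity) hlt
      _ = τ * d + e := by field_simp
  have hT : (bouligand {y | φ y ≤ 0} x).Nonempty := ⟨0, zero_mem_bouligand_s14 hx.le⟩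
  calc ((infEDist h {u | hadamardDeriv φ x u ≤ 0} : ℝ≥0∞) : EReal)
      ≤ ((infEDist h (bouligand {y | φ y ≤ 0} x) : ℝ≥0∞) : EReal) :=
        EReal.coe_ennreal_le_coe_ennreal_iff.2
          (infEDist_anti fun v hv => hadamardDeriv_nonpos_of_mem_bouligand hx hv)
    _ = ((infDist h (bouligand {y | φ y ≤ 0} x) : ℝ) : EReal) := by
        rw [← ENNReal.ofReal_toReal (infEDist_ne_top hT), EReal.coe_ennreal_ofReal,
          max_eq_left ENNReal.toReal_nonneg]
        rfl
    _ ≤ ((τ * d : ℝ) : EReal) := by exact_mod_cast hdist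
    _ = (τ : EReal) * max (hadamardDeriv φ x h) 0 := by
        rw [max_eq_left hD.le, ← hd, EReal.coe_mul]

end HadamardDeriv

end

theorem global_error_bound_of_derivative_of_local_error_bound_general {X : Type*}
    [NormedAddCommGroup X] [NormedSpace ℝ X]
    (φ : X → EReal)
    (S : Set X) (hS : S = {x | φ x ≤ 0}) (xbar : X)
    (hbd : frontier S ⊆ {x | φ x = 0})
    (r₀ : ℝ) (hr₀ : 0 < r₀) (hshap : ∀ z ∈ S ∩ ball xbar r₀, shapiro S z)
    (τ : ℝ) (hτ : 0 < τ)
    (heb : ∃ δ > (0 : ℝ), ∀ x ∈ ball xbar δ,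
      ((infDist x S : ℝ) : EReal) ≤ (τ : EReal) * max (φ x) 0) :
    ∃ δ > (0 : ℝ), ∀ x ∈ frontier S ∩ ball xbar δ, ∀ h : X,
      ((EMetric.infEdist h {u | hadamardDeriv φ x u ≤ 0} : ℝ≥0∞) : EReal) ≤
        (τ : EReal) * max (hadamardDeriv φ x h) 0 := by
  obtain ⟨δ, hδ, heb⟩ := heb
  subst hS
  refine ⟨min δ r₀, lt_min hδ hr₀, fun x ⟨hxfr, hxδ⟩ h => ?_⟩
  have hx : φ x = 0 := hbd hxfr
  refine infEDist_le_mul_max_hadamardDeriv hx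
    (hshap x ⟨hx.le, ball_subset_ball (min_le_right _ _) hxδ⟩) hτ ?_ h
  exact eventually_of_mem (isOpen_ball.mem_nhds (ball_subset_ball (min_le_left _ _) hxδ)) heb

theorem global_error_bound_of_derivative_of_local_error_bound {X : Type*}
    [NormedAddCommGroup X] [NormedSpace ℝ X] [CompleteSpace X]
    (φ : X → EReal) (hlsc : LowerSemicontinuous φ) (hbot : ∀ x, φ x ≠ ⊥)
    (hproper : ∃ x, φ x ≠ ⊤)
    (S : Set X) (hS : S = {x | φ x ≤ 0}) (xbar : X) (hxbar : xbar ∈ S)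
    (hbd : frontier S ⊆ {x | φ x = 0})
    (hepishap : shapiro (epigraph φ) (xbar, (φ xbar).toReal))
    (r₀ : ℝ) (hr₀ : 0 < r₀) (hshap : ∀ z ∈ S ∩ ball xbar r₀, shapiro S z)
    (τ : ℝ) (hτ : 0 < τ)
    (heb : ∃ δ > (0 : ℝ), ∀ x ∈ ball xbar δ,
      ((infDist x S : ℝ) : EReal) ≤ (τ : EReal) * max (φ x) 0) :
    ∃ δ > (0 : ℝ), ∀ x ∈ frontier S ∩ ball xbar δ, ∀ h : X,
      ((EMetric.infEdist h {u | hadamardDeriv φ x u ≤ 0} : ℝ≥0∞) : EReal) ≤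
        (τ : EReal) * max (hadamardDeriv φ x h) 0 :=
  global_error_bound_of_derivative_of_local_error_bound_general φ S hS xbar hbd r₀ hr₀ hshap τ hτ
    heb
end
end
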